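/- Let W = W_N ⋯ W_1 be a product of d×d matrices satisfying the balance conditions W_j W_jᴴ = W_{j+1}ᴴ W_{j+1} for 1 ≤ j ≤ N−1. Then W_N W_Nᴴ = (W Wᴴ)^{1/N} and W_1ᴴ W_1 = (Wᴴ W)^{1/N}, where the N-th root is the unique positive semi-definite N-th root. -/
import Mathlib

open Matrix
open scoped ComplexOrder

/-- The ordered product `W_N * W_{N-1} * ⋯ * W_j` (the identity if `j > N`). -/
noncomputable def prodFrom {d : ℕ} (W : ℕ → Matrix (Fin d) (Fin d) ℂ) (j N : ℕ) :
    Matrix (Fin d) (Fin d) ℂ :=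
  ((List.range (N + 1 - j)).map (fun i => W (N - i))).prod

lemma prodFrom_self {d : ℕ} (W : ℕ → Matrix (Fin d) (Fin d) ℂ) (N : ℕ) :
    prodFrom W N N = W N := by
  have : N + 1 - N = 1 := by omega
  simp [prodFrom, this, List.range_succ]

lemma prodFrom_step {d : ℕ} (W : ℕ → Matrix (Fin d) (Fin d) ℂ) {j N : ℕ} (h : j ≤ N) :
    prodFrom W j N = prodFrom W (j + 1) N * W j := by
  unfold prodFrom
  have h1 : N + 1 - j = (N - j) + 1 := by omega
  have h2 : N + 1 - (j + 1) = N - j := by omega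
  have h3 : N - (N - j) = j := by omega
  rw [h1, h2, List.range_succ, List.map_append, List.prod_append]
  simp only [List.map_cons, List.map_nil, List.prod_cons, List.prod_nil, mul_one, h3]

lemma prodFrom_one_succ {d : ℕ} (W : ℕ → Matrix (Fin d) (Fin d) ℂ) (j : ℕ) :
    prodFrom W 1 (j + 1) = W (j + 1) * prodFrom W 1 j := by
  unfold prodFrom
  have h1 : j + 1 + 1 - 1 = j + 1 := by omega
  have h2 : j + 1 - 1 = j := by omega
  rw [h1, h2, List.range_succ_eq_map]
  simp only [List.map_cons, List.prod_cons, List.map_map, Nat.sub_zero]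
  have : ((fun i => W (j + 1 - i)) ∘ Nat.succ) = fun i => W (j - i) := by
    funext i
    have h3 : j + 1 - (i + 1) = j - i := by omega
    show W (j + 1 - (i + 1)) = W (j - i)
    rw [h3]
  rw [this]

lemma intertw {d : ℕ} (A : Matrix (Fin d) (Fin d) ℂ) (m : ℕ) :
    A * (Aᴴ * A) ^ m = (A * Aᴴ) ^ m * A := by
  induction m with
  | zero => simp
  | succ k ih =>
    calc A * (Aᴴ * A) ^ (k + 1) = (A * (Aᴴ * A) ^ k) * (Aᴴ * A) := by
          rw [pow_succ, mul_assoc]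
      _ = (A * Aᴴ) ^ k * A * (Aᴴ * A) := by rw [ih]
      _ = (A * Aᴴ) ^ (k + 1) * A := by rw [pow_succ]; simp only [mul_assoc]

/-- Under the balance conditions, with `W = W_N ⋯ W_1`, the matrix `W_N W_Nᴴ` is the unique
positive semi-definite `N`-th root of `W Wᴴ`, and `W_1ᴴ W_1` is the unique positive
semi-definite `N`-th root of `Wᴴ W`. -/
theorem stmt8 {d N : ℕ} (hN : 1 ≤ N) (W : ℕ → Matrix (Fin d) (Fin d) ℂ)
    (hbal : ∀ j, 1 ≤ j → j ≤ N - 1 → W j * (W j)ᴴ = (W (j + 1))ᴴ * W (j + 1)) :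
    ((W N * (W N)ᴴ).PosSemidef ∧
        (W N * (W N)ᴴ) ^ N = prodFrom W 1 N * (prodFrom W 1 N)ᴴ) ∧
      ((W 1)ᴴ * W 1).PosSemidef ∧
        ((W 1)ᴴ * W 1) ^ N = (prodFrom W 1 N)ᴴ * prodFrom W 1 N := by
  set B := W N * (W N)ᴴ with hB
  set A := (W 1)ᴴ * W 1 with hA
  have E : ∀ k j, j + k = N → 1 ≤ j → ∀ m,
      prodFrom W j N * ((W j)ᴴ * W j) ^ m = B ^ m * prodFrom W j N := by
    intro k
    induction k with
    | zero =>
      intro j hj _ m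
      have : j = N := by omega
      subst this
      rw [prodFrom_self, intertw]
    | succ k ih =>
      intro j hjk hj m
      have hjN : j ≤ N := by omega
      have hbj : W j * (W j)ᴴ = (W (j + 1))ᴴ * W (j + 1) := hbal j hj (by omega)
      rw [prodFrom_step W hjN, mul_assoc, intertw, hbj, ← mul_assoc,
        ih (j + 1) (by omega) (by omega) m, mul_assoc]
  have F : ∀ k j, j + k = N → 1 ≤ j →
      prodFrom W j N * (prodFrom W j N)ᴴ = B ^ (k + 1) := by
    intro k
    induction k with
    | zero =>
      intro j hj _
      have : j = N := by omega
      subst this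
      rw [prodFrom_self, pow_one]
    | succ k ih =>
      intro j hjk hj
      have hjN : j ≤ N := by omega
      have hbj : W j * (W j)ᴴ = (W (j + 1))ᴴ * W (j + 1) := hbal j hj (by omega)
      have hE := E k (j + 1) (by omega) (by omega) 1
      rw [pow_one] at hE
      calc prodFrom W j N * (prodFrom W j N)ᴴ
          = prodFrom W (j+1) N * ((W (j+1))ᴴ * W (j+1)) * (prodFrom W (j+1) N)ᴴ := by
            rw [prodFrom_step W hjN, conjTranspose_mul, ← hbj]
            simp only [mul_assoc]
        _ = B * (prodFrom W (j+1) N * (prodFrom W (j+1) N)ᴴ) := by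
            rw [hE, mul_assoc, pow_one]
        _ = B ^ (k + 1 + 1) := by
            rw [ih (j+1) (by omega) (by omega)]
            simp only [pow_succ', pow_one]
  have G : ∀ j, 1 ≤ j → j ≤ N → ∀ m,
      (W j * (W j)ᴴ) ^ m * prodFrom W 1 j = prodFrom W 1 j * A ^ m := by
    intro j hj
    induction j, hj using Nat.le_induction with
    | base =>
      intro _ m
      have h1 : prodFrom W 1 1 = W 1 := prodFrom_self W 1
      rw [h1, ← intertw, hA]
    | succ j hj ih =>
      intro hjN m
      have hbj : W j * (W j)ᴴ = (W (j + 1))ᴴ * W (j + 1) := hbal j hj (by omega)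
      rw [prodFrom_one_succ, ← mul_assoc, ← intertw, ← hbj, mul_assoc,
        ih (by omega) m, mul_assoc]
  have H : ∀ j, 1 ≤ j → j ≤ N → (prodFrom W 1 j)ᴴ * prodFrom W 1 j = A ^ j := by
    intro j hj
    induction j, hj using Nat.le_induction with
    | base =>
      intro _
      rw [prodFrom_self, pow_one]
    | succ j hj ih =>
      intro hjN
      have hbj : W j * (W j)ᴴ = (W (j + 1))ᴴ * W (j + 1) := hbal j hj (by omega)
      have hG := G j hj (by omega) 1
      rw [pow_one] at hG
      calc (prodFrom W 1 (j+1))ᴴ * prodFrom W 1 (j+1)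
          = (prodFrom W 1 j)ᴴ * ((W (j+1))ᴴ * W (j+1) * prodFrom W 1 j) := by
            rw [prodFrom_one_succ, conjTranspose_mul]
            simp only [mul_assoc]
        _ = (prodFrom W 1 j)ᴴ * (prodFrom W 1 j * A) := by rw [← hbj, hG, pow_one]
        _ = A ^ (j + 1) := by rw [← mul_assoc, ih (by omega), pow_succ]
  refine ⟨⟨Matrix.posSemidef_self_mul_conjTranspose _, ?_⟩,
    Matrix.posSemidef_conjTranspose_mul_self _, ?_⟩
  · have hF := F (N - 1) 1 (by omega) le_rfl
    rw [hF]
    congr 1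
    omega
  · exact (H N hN le_rfl).symm
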